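/- Apolarity for modules, local version: let k be a field, S := k[y₁,…,yₙ] with maximal ideal m := (y₁,…,yₙ), and F a free S-module of finite rank. The bijection K ↦ K^⊥, M ↦ M^⊥ of apolarity restricts to a bijection between (a) the set of cofinite S-submodules K ⊆ F such that m^D·F ⊆ K for some D ≥ 0 (equivalently, F/K is supported only at the origin), and (b) the set of finite-dimensional contraction-stable k-subspaces M ⊆ Hom_k(F,k) all of whose elements vanish on m^D·F for some D ≥ 0 (i.e. M lies in the restricted dual of F). -/

import Mathlib

/-!
Everything happens over `k`. As `k`-subspaces, `K^⊥` is the dual annihilator of `K` and `M^⊥`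
the dual coannihilator of `M`; these are mutually inverse between subspaces of finite
codimension and finite-dimensional subspaces of the dual, and the annihilator reverses and
reflects inclusions, so `m^D F ⊆ K` iff `K^⊥` vanishes on `m^D F`. Contraction stability of `M`
is exactly what makes `M^⊥` an `S`-submodule.
-/

variable (k : Type*) [Field k] (n : ℕ)
  (F : Type*) [AddCommGroup F] [Module (MvPolynomial (Fin n) k) F]
  [Module k F] [IsScalarTower k (MvPolynomial (Fin n) k) F]

/-- Contraction: the `k`-linear endomorphism `f ↦ s • f` of `F`. -/
noncomputable def contrMul (s : MvPolynomial (Fin n) k) : F →ₗ[k] F :=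
  (LinearMap.lsmul (MvPolynomial (Fin n) k) F s).restrictScalars k

/-- `K^⊥ = { φ ∈ Hom_k(F,k) : φ vanishes on K }`. -/
def dualAnn (K : Submodule (MvPolynomial (Fin n) k) F) : Submodule k (F →ₗ[k] k) where
  carrier := {φ | ∀ x ∈ K, φ x = 0}
  zero_mem' := by intro x hx; simp
  add_mem' := by
    intro a b ha hb x hx
    simp [ha x hx, hb x hx]
  smul_mem' := by
    intro c φ hφ x hx
    simp [hφ x hx]

/-- `M^⊥ = { f ∈ F : φ(f) = 0 for all φ ∈ M }` as a subset of `F`. -/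
def perpSet (M : Submodule k (F →ₗ[k] k)) : Set F := {f | ∀ φ ∈ M, φ f = 0}

/-- A subspace `M ⊆ Hom_k(F,k)` is contraction-stable if it is closed under
`φ ↦ (f ↦ φ(s·f))` for all `s ∈ S`. -/
def ContractionStable (M : Submodule k (F →ₗ[k] k)) : Prop :=
  ∀ (s : MvPolynomial (Fin n) k), ∀ φ ∈ M, φ.comp (contrMul k n F s) ∈ M

/-- The irrelevant maximal ideal `m = (y₁,…,yₙ)` of `S = k[y₁,…,yₙ]`. -/
noncomputable def irrIdeal : Ideal (MvPolynomial (Fin n) k) :=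
  Ideal.span (Set.range (MvPolynomial.X : Fin n → MvPolynomial (Fin n) k))

section Apolarity

variable {k n F}

theorem dualAnn_eq_dualAnnihilator (K : Submodule (MvPolynomial (Fin n) k) F) :
    dualAnn k n F K = (K.restrictScalars k).dualAnnihilator :=
  Submodule.ext fun φ => (Submodule.mem_dualAnnihilator (W := K.restrictScalars k) φ).symm

theorem le_iff_forall_mem_dualAnn_apply_eq_zero (N K : Submodule (MvPolynomial (Fin n) k) F) :
    N ≤ K ↔ ∀ φ ∈ dualAnn k n F K, ∀ f ∈ N, φ f = 0 := by
  rw [← Submodule.restrictScalars_le k, ← Subspace.dualAnnihilator_le_dualAnnihilator_iff,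
    dualAnn_eq_dualAnnihilator]
  exact forall₂_congr fun φ _ => Submodule.mem_dualAnnihilator φ

def ContractionStable.perp {M : Submodule k (F →ₗ[k] k)} (hM : ContractionStable k n F M) :
    Submodule (MvPolynomial (Fin n) k) F where
  carrier := perpSet k F M
  zero_mem' _ _ := map_zero _
  add_mem' ha hb φ hφ := by rw [map_add, ha φ hφ, hb φ hφ, add_zero]
  smul_mem' s _ hf φ hφ := hf _ (hM s φ hφ)

theorem ContractionStable.restrictScalars_perp {M : Submodule k (F →ₗ[k] k)}
    (hM : ContractionStable k n F M) : hM.perp.restrictScalars k = M.dualCoannihilator :=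
  Submodule.ext fun f => (Submodule.mem_dualCoannihilator (Φ := M) f).symm

theorem ContractionStable.dualAnn_perp {M : Submodule k (F →ₗ[k] k)} [FiniteDimensional k M]
    (hM : ContractionStable k n F M) : dualAnn k n F hM.perp = M := by
  rw [dualAnn_eq_dualAnnihilator, hM.restrictScalars_perp,
    Subspace.dualCoannihilator_dualAnnihilator_eq]

theorem ContractionStable.finiteDimensional_quotient_perp {M : Submodule k (F →ₗ[k] k)}
    [FiniteDimensional k M] (hM : ContractionStable k n F M) :
    FiniteDimensional k (F ⧸ hM.perp) := by
  have : FiniteDimensional k (F ⧸ hM.perp.restrictScalars k) := by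
    rw [hM.restrictScalars_perp]
    exact Subspace.finiteDimensional_quot_dualCoannihilator_iff.mpr ‹_›
  exact Module.Finite.equiv (Submodule.Quotient.restrictScalarsEquiv k hM.perp)

end Apolarity

theorem apolarity_local :
    (∀ K : Submodule (MvPolynomial (Fin n) k) F, FiniteDimensional k (F ⧸ K) →
        ((∃ D : ℕ, (irrIdeal k n) ^ D • (⊤ : Submodule (MvPolynomial (Fin n) k) F) ≤ K) ↔
          (∃ D : ℕ, ∀ φ ∈ dualAnn k n F K,
            ∀ f ∈ (irrIdeal k n) ^ D • (⊤ : Submodule (MvPolynomial (Fin n) k) F),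
              φ f = 0))) ∧
      (∀ M : Submodule k (F →ₗ[k] k), FiniteDimensional k M → ContractionStable k n F M →
        (∃ D : ℕ, ∀ φ ∈ M,
            ∀ f ∈ (irrIdeal k n) ^ D • (⊤ : Submodule (MvPolynomial (Fin n) k) F),
              φ f = 0) →
          ∃ K : Submodule (MvPolynomial (Fin n) k) F,
            (K : Set F) = perpSet k F M ∧ FiniteDimensional k (F ⧸ K) ∧
              (∃ D : ℕ, (irrIdeal k n) ^ D • (⊤ : Submodule (MvPolynomial (Fin n) k) F) ≤ K) ∧
              dualAnn k n F K = M) := by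
  refine ⟨fun K _ => exists_congr fun D => le_iff_forall_mem_dualAnn_apply_eq_zero _ K,
    fun M _ hM hvanish => ?_⟩
  refine ⟨hM.perp, rfl, hM.finiteDimensional_quotient_perp, ?_, hM.dualAnn_perp⟩
  simpa only [le_iff_forall_mem_dualAnn_apply_eq_zero, hM.dualAnn_perp] using hvanish
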